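/- Let f : A → A be a continuous map of degree d with |d| > 1. If every lift F : Ã → Ã of f has a fixed point, then f has exactly |d − 1| Nielsen classes of fixed points. -/

import Mathlib

open Set Filter Topology

noncomputable section

/-- The open annulus `A = S¹ × (0,1)`. -/
abbrev Ann : Type := Circle × (Set.Ioo (0:ℝ) 1)

/-- The universal cover `Ã = ℝ × (0,1)`. -/
abbrev AnnTil : Type := ℝ × (Set.Ioo (0:ℝ) 1)

/-- The covering projection `π(x,y) = (exp(2πix), y)`. -/
def pr : AnnTil → Ann := fun z => (Circle.exp (2 * Real.pi * z.1), z.2)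

/-- Translation by an integer in the first coordinate: `z + k`. -/
def tr (z : AnnTil) (k : ℤ) : AnnTil := (z.1 + k, z.2)

/-- `F` is a lift of `f`. -/
def IsLift (f : Ann → Ann) (F : AnnTil → AnnTil) : Prop :=
  Continuous F ∧ pr ∘ F = f ∘ pr

/-- `f` has degree `d`: some lift satisfies `F(z+1) = F(z) + d`. -/
def HasDegree (f : Ann → Ann) (d : ℤ) : Prop :=
  ∃ F : AnnTil → AnnTil, IsLift f F ∧ ∀ z, F (tr z 1) = tr (F z) d

/-- A subset of the annulus is essential if it is not contained in any
connected, simply connected open subset. -/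
def IsEssential (K : Set Ann) : Prop :=
  ¬ ∃ U : Set Ann, IsOpen U ∧ IsConnected U ∧ SimplyConnectedSpace U ∧ K ⊆ U

/-- Nielsen equivalence of fixed points `p`, `q` of `g`: there is a path `γ`
from `p` to `q` homotopic (rel endpoints) to `g ∘ γ`. -/
def NielsenEquiv (g : Ann → Ann) (p q : Ann) : Prop :=
  ∃ (hg : Continuous g) (hp : g p = p) (hq : g q = q) (γ : Path p q),
    γ.Homotopic ((γ.map hg).cast hp.symm hq.symm)

/-- `g` has exactly `N` Nielsen classes of fixed points. -/
def HasExactlyNielsenClasses (g : Ann → Ann) (N : ℕ) : Prop :=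
  ∃ S : Finset Ann, S.card = N ∧ (∀ p ∈ S, g p = p) ∧
    (∀ p ∈ S, ∀ q ∈ S, p ≠ q → ¬ NielsenEquiv g p q) ∧
    (∀ p, g p = p → ∃ q ∈ S, NielsenEquiv g p q)

/-- `Fill K`: the union of `K` with the connected components of its
complement whose closure is compact. -/
def Fill (K : Set Ann) : Set Ann :=
  K ∪ {x | x ∈ Kᶜ ∧ IsCompact (closure (connectedComponentIn Kᶜ x))}

/-!
Fix a lift `F` of `f` with `F (z + 1) = F z + d`; the lifts of `f` are the maps `F + k`, `k ∈ ℤ`.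
Let `u`, `v` be fixed points of `F + k` and `F + j`. Lifting a Nielsen path from `π u` to `π v`
at `u` ends at a fixed point `v + m` of `F + k`, and `F + k` fixes `v + m` exactly when
`(d - 1) m = j - k`. Conversely, two fixed points of one lift are joined in the simply connected
cover by a path that is homotopic to its image, and this projects to a Nielsen path. Hence
`π u` and `π v` are Nielsen equivalent iff `d - 1 ∣ j - k`, and since every `F + k` has a fixed
point, the Nielsen classes are in bijection with `ℤ / (d - 1)`.
-/

theorem IsCoveringMap.prodMap_id {E X : Type*} [TopologicalSpace E] [TopologicalSpace X]
    {p : E → X} (hp : IsCoveringMap p) (Y : Type*) [TopologicalSpace Y] :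
    IsCoveringMap (Prod.map p (id : Y → Y)) := by
  rintro ⟨x, y⟩
  obtain ⟨_, U, hxU, hU, hpU, H, hH⟩ := hp x
  refine IsEvenlyCovered.to_isEvenlyCovered_preimage (I := p ⁻¹' {x})
    ⟨inferInstance, U ×ˢ univ, ⟨hxU, trivial⟩, hU.prod isOpen_univ, hpU.prod isOpen_univ,
      (Homeomorph.setCongr (by ext; simp)).trans <| (Homeomorph.Set.prod (p ⁻¹' U) univ).trans <|
        (H.prodCongr (.refl _)).trans <| (Homeomorph.prodAssoc _ _ _).trans <|
        ((Homeomorph.refl _).prodCongr (Homeomorph.prodComm _ _)).trans <|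
        (Homeomorph.prodAssoc _ _ _).symm.trans <|
        (Homeomorph.Set.prod U univ).symm.prodCongr (.refl _),
      fun z => Prod.ext (hH _) rfl⟩

section FixedPointLifts

variable {E X : Type*} [TopologicalSpace E] [TopologicalSpace X] {p : E → X} {f : X → X}
  {G : E → E}

/-- `G` maps the lift of `γ` at `e` to the lift of `f ∘ γ` at `e`, and lifts of homotopic paths
from the same point have the same endpoint. -/
theorem IsCoveringMap.exists_fixed_lift_of_homotopic (cov : IsCoveringMap p) (hf : Continuous f)
    (hG : Continuous G) (hGp : ∀ e, p (G e) = f (p e)) {x y : X} (hx : f x = x) (hy : f y = y)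
    (γ : Path x y) (hγ : γ.Homotopic ((γ.map hf).cast hx.symm hy.symm)) {e : E} (hex : p e = x)
    (he : G e = e) : ∃ e', p e' = y ∧ G e' = e' := by
  have h₀ : γ.toContinuousMap 0 = p e := by simp [hex]
  have h₁ : ((γ.map hf).cast hx.symm hy.symm).toContinuousMap 0 = p e := by simp [hex]
  set Γ := cov.liftPath γ.toContinuousMap e h₀
  have hΓ : ∀ t, p (Γ t) = γ t := congrFun (cov.liftPath_lifts γ.toContinuousMap e h₀)
  have hGΓ : (⟨G, hG⟩ : C(E, E)).comp Γ = cov.liftPath _ e h₁ := by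
    rw [cov.eq_liftPath_iff']
    refine ⟨funext fun t => ?_, ?_⟩
    · simp [hGp, hΓ]
    · simp only [ContinuousMap.comp_apply, ContinuousMap.coe_mk, Γ, cov.liftPath_zero, he]
  refine ⟨Γ 1, by simp [hΓ], ?_⟩
  calc G (Γ 1) = cov.liftPath _ e h₁ 1 := congrFun (congrArg DFunLike.coe hGΓ) 1
    _ = Γ 1 := (cov.liftPath_apply_one_eq_of_homotopicRel ⟨hγ.some⟩ e h₀ h₁).symm

theorem exists_homotopic_of_fixed_lift [SimplyConnectedSpace E] (hp : Continuous p)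
    (hf : Continuous f) (hG : Continuous G) (hGp : ∀ e, p (G e) = f (p e)) {u v : E}
    (hu : G u = u) (hv : G v = v) (hfu : f (p u) = p u) (hfv : f (p v) = p v) :
    ∃ γ : Path (p u) (p v), γ.Homotopic ((γ.map hf).cast hfu.symm hfv.symm) := by
  let s := PathConnectedSpace.somePath u v
  refine ⟨s.map hp, ?_⟩
  have hGs :
      ((s.map hG).cast hu.symm hv.symm).map hp = ((s.map hp).map hf).cast hfu.symm hfv.symm := by
    ext t
    simp [hGp]
  rw [← hGs]
  exact (SimplyConnectedSpace.paths_homotopic _ _).map ⟨p, hp⟩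

end FixedPointLifts

theorem isCoveringMap_pr : IsCoveringMap pr :=
  (Circle.isCoveringMap_exp.comp_homeomorph
    (Homeomorph.mulLeft₀ (2 * Real.pi) (by positivity))).prodMap_id _

instance : ContractibleSpace (Ioo (0 : ℝ) 1) :=
  (convex_Ioo 0 1).contractibleSpace (nonempty_Ioo.2 zero_lt_one)

@[simp] theorem tr_tr (z : AnnTil) (a b : ℤ) : tr (tr z a) b = tr z (a + b) := by
  simp [tr, add_assoc]

@[simp] theorem tr_zero (z : AnnTil) : tr z 0 = z := by
  simp [tr]

@[simp] theorem tr_inj {z : AnnTil} {a b : ℤ} : tr z a = tr z b ↔ a = b := by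
  simp [tr]

theorem tr_eq_iff_eq_tr {a b : AnnTil} {k : ℤ} : tr a k = b ↔ a = tr b (-k) := by
  constructor <;> rintro rfl <;> simp

@[simp] theorem pr_tr (z : AnnTil) (k : ℤ) : pr (tr z k) = pr z := by
  refine Prod.ext ?_ rfl
  show Circle.exp (2 * Real.pi * (z.1 + k)) = Circle.exp (2 * Real.pi * z.1)
  rw [mul_add, Circle.exp_add, mul_comm _ (k : ℝ), Circle.exp_int_mul_two_pi, mul_one]

theorem pr_eq_pr_iff {a b : AnnTil} : pr a = pr b ↔ ∃ m : ℤ, a = tr b m := by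
  refine ⟨fun h => ?_, fun ⟨m, h⟩ => h ▸ pr_tr b m⟩
  obtain ⟨h₁, h₂⟩ := Prod.mk.inj h
  obtain ⟨m, hm⟩ := Circle.exp_eq_exp.mp h₁
  refine ⟨m, Prod.ext (mul_left_cancel₀ Real.two_pi_pos.ne' ?_) h₂⟩
  simp only [tr]
  linear_combination hm

theorem pr_surjective : Function.Surjective pr := by
  rintro ⟨c, y⟩
  obtain ⟨x, rfl⟩ := Circle.exp_surjective c
  exact ⟨(x / (2 * Real.pi), y), by simp [pr, mul_div_cancel₀ x Real.two_pi_pos.ne']⟩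

def liftShift (F : AnnTil → AnnTil) (k : ℤ) (z : AnnTil) : AnnTil := tr (F z) k

section Lifts

variable {f : Ann → Ann} {F G : AnnTil → AnnTil} {d : ℤ}

theorem isLift_liftShift (hF : IsLift f F) (k : ℤ) : IsLift f (liftShift F k) :=
  ⟨((continuous_fst.comp hF.1).add continuous_const).prodMk (continuous_snd.comp hF.1),
    funext fun z => by simpa [liftShift] using congrFun hF.2 z⟩

theorem IsLift.apply_pr_of_apply_eq_self (hG : IsLift f G) {z : AnnTil} (hz : G z = z) :
    f (pr z) = pr z :=
  (congrFun hG.2 z).symm.trans (congrArg pr hz)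

theorem IsLift.exists_liftShift_apply_eq_self (hF : IsLift f F) {p : Ann} (hp : f p = p) :
    ∃ k z, pr z = p ∧ liftShift F k z = z := by
  obtain ⟨z, rfl⟩ := pr_surjective p
  obtain ⟨m, hm⟩ := pr_eq_pr_iff.mp ((congrFun hF.2 z).trans hp)
  exact ⟨-m, z, rfl, by simp [liftShift, hm]⟩

theorem apply_tr_of_degree (hFd : ∀ z, F (tr z 1) = tr (F z) d) (m : ℤ) (z : AnnTil) :
    F (tr z m) = tr (F z) (m * d) := by
  induction m using Int.induction_on generalizing z with
  | zero => simp
  | succ n ih => rw [← tr_tr, hFd, ih, tr_tr]; ring_nf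
  | pred n ih =>
    have h := hFd (tr z (-n - 1))
    rw [tr_tr, sub_add_cancel, ih, eq_comm, tr_eq_iff_eq_tr, tr_tr] at h
    rw [h]
    ring_nf

theorem liftShift_tr_eq_self_iff (hFd : ∀ z, F (tr z 1) = tr (F z) d) {j k m : ℤ} {v : AnnTil}
    (hv : liftShift F j v = v) : liftShift F k (tr v m) = tr v m ↔ (d - 1) * m = j - k := by
  rw [liftShift, tr_eq_iff_eq_tr] at hv
  rw [liftShift, apply_tr_of_degree hFd, hv, tr_tr, tr_tr, tr_inj]
  constructor <;> intro h <;> linarith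

end Lifts

theorem nielsenEquiv_pr_iff {f : Ann → Ann} {F : AnnTil → AnnTil} {d : ℤ} (hf : Continuous f)
    (hF : IsLift f F) (hFd : ∀ z, F (tr z 1) = tr (F z) d) {j k : ℤ} {u v : AnnTil}
    (hu : liftShift F k u = u) (hv : liftShift F j v = v) :
    NielsenEquiv f (pr u) (pr v) ↔ d - 1 ∣ j - k := by
  have hG := isLift_liftShift hF k
  have hGp : ∀ z, pr (liftShift F k z) = f (pr z) := congrFun hG.2
  constructor
  · intro ⟨_, hfu, hfv, γ, hγ⟩
    obtain ⟨w, hw, hGw⟩ :=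
      isCoveringMap_pr.exists_fixed_lift_of_homotopic hf hG.1 hGp hfu hfv γ hγ rfl hu
    obtain ⟨m, rfl⟩ := pr_eq_pr_iff.mp hw
    exact ⟨m, ((liftShift_tr_eq_self_iff hFd hv).mp hGw).symm⟩
  · rintro ⟨m, hm⟩
    have hvm : liftShift F k (tr v m) = tr v m := (liftShift_tr_eq_self_iff hFd hv).mpr hm.symm
    have hfu := hG.apply_pr_of_apply_eq_self hu
    have hfv := hG.apply_pr_of_apply_eq_self hvm
    obtain ⟨γ, hγ⟩ :=
      exists_homotopic_of_fixed_lift isCoveringMap_pr.continuous hf hG.1 hGp hu hvm hfu hfv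
    rw [← pr_tr v m]
    exact ⟨hf, hfu, hfv, γ, hγ⟩

/-- If every lift of `f` has a fixed point, then `f` has exactly `|d-1|`
Nielsen classes of fixed points. -/
theorem stmt_8 (f : Ann → Ann) (hf : Continuous f) (d : ℤ)
    (hdeg : HasDegree f d) (hd : 1 < |d|)
    (hfix : ∀ F : AnnTil → AnnTil, IsLift f F → ∃ z : AnnTil, F z = z) :
    HasExactlyNielsenClasses f (d - 1).natAbs := by
  classical
  obtain ⟨F, hF, hFd⟩ := hdeg
  set N := (d - 1).natAbs
  have : NeZero N := ⟨Int.natAbs_ne_zero.mpr fun h => by simp [show d = 1 by omega] at hd⟩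
  choose w hw using fun k : ℤ => hfix _ (isLift_liftShift hF k)
  have hclass {j k : ℤ} {u v : AnnTil} (hu : liftShift F k u = u) (hv : liftShift F j v = v) :
      NielsenEquiv f (pr u) (pr v) ↔ (k : ZMod N) = j := by
    rw [nielsenEquiv_pr_iff hf hF hFd hu hv, ZMod.intCast_eq_intCast_iff_dvd_sub, Int.natAbs_dvd]
  have hrep {a b : ZMod N} (h : NielsenEquiv f (pr (w a.val)) (pr (w b.val))) : a = b := by
    simpa using (hclass (hw _) (hw _)).mp h
  refine ⟨Finset.univ.image fun r : ZMod N => pr (w r.val), ?_, ?_, ?_, ?_⟩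
  · rw [Finset.card_image_of_injective _ fun a b hab => ?_, Finset.card_univ, ZMod.card]
    exact hrep (hab ▸ (hclass (hw _) (hw _)).mpr rfl)
  · simp only [Finset.mem_image, Finset.mem_univ, true_and, forall_exists_index,
      forall_apply_eq_imp_iff]
    exact fun r => (isLift_liftShift hF _).apply_pr_of_apply_eq_self (hw _)
  · simp only [Finset.mem_image, Finset.mem_univ, true_and, forall_exists_index,
      forall_apply_eq_imp_iff]
    exact fun a b hab h => hab (by rw [hrep h])
  · intro p hp
    obtain ⟨k, z, rfl, hz⟩ := hF.exists_liftShift_apply_eq_self hp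
    exact ⟨_, Finset.mem_image_of_mem _ (Finset.mem_univ (k : ZMod N)),
      (hclass hz (hw _)).mpr (by simp)⟩
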